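/- Let M>1 and let φ be a twice continuously differentiable function on (0,∞) with φ'' > 0; let m = min of φ'' and M_φ = max of φ'' on [1/M, M]. Let S be a finite set; for σ∈S let a_σ≥0, u_σ∈ℝ, and a neighbour density ρ_{L,σ} ∈ [1/M, M]; let |K|>0, δt>0, and ρⁿ, ρⁿ⁺¹ ∈ [1/M, M]. Define the upwind face densities ρ_σ = ρⁿ if u_σ ≥ 0 and ρ_σ = ρ_{L,σ} if u_σ < 0. Assume the discrete mass balance (|K|/δt)(ρⁿ⁺¹−ρⁿ) + Σ_{σ∈S} a_σ·ρ_σ·u_σ = 0 and the CFL condition δt·M_φ²·Σ_{σ∈S} a_σ·(u_σ)⁻ ≤ m²·|K|, where (u)⁻ = max(−u,0). Then there exists a real number R with |R| ≤ M_φ·M·|ρⁿ⁺¹−ρⁿ|·|Σ_{σ∈S} a_σ·u_σ| such that (|K|/δt)(φ(ρⁿ⁺¹) − φ(ρⁿ)) + Σ_{σ∈S} a_σ·φ(ρ_σ)·u_σ + (ρⁿ·φ'(ρⁿ) − φ(ρⁿ))·Σ_{σ∈S} a_σ·u_σ + R ≤ 0. -/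

import Mathlib

/-!
Write `T(p, q) = φ q - φ p - φ'(p) (q - p)`. Since only inflow faces (`u_σ < 0`) carry a density
other than `ρⁿ`, the mass balance turns the left-hand side without `R` into
`(|K|/δt) T(ρⁿ, ρⁿ⁺¹) - Σ a_σ (u_σ)⁻ T(ρⁿ, ρ_σ)`, and `m ≤ φ'' ≤ M_φ` bounds this by
`(M_φ (|K|/δt) (ρⁿ⁺¹ - ρⁿ)² - m Σ a_σ (u_σ)⁻ (ρ_σ - ρⁿ)²) / 2`. Testing the mass balance against
`ρⁿ⁺¹ - ρⁿ`, Young's inequality on the inflow terms and the CFL condition let the numerical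
diffusion `m Σ a_σ (u_σ)⁻ (ρ_σ - ρⁿ)²` absorb the time term up to `2 M_φ M |ρⁿ⁺¹ - ρⁿ| |Σ a_σ u_σ|`.
-/

open Finset Set

theorem ConvexOn.add_deriv_mul_sub_le {s : Set ℝ} {f : ℝ → ℝ} {f' p q : ℝ}
    (hf : ConvexOn ℝ s f) (hp : p ∈ s) (hq : q ∈ s) (hfp : HasDerivAt f f' p) :
    f p + f' * (q - p) ≤ f q := by
  rcases lt_trichotomy p q with hpq | rfl | hqp
  · have h := hf.le_slope_of_hasDerivAt hp hq hpq hfp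
    rw [slope_def_field, le_div_iff₀ (sub_pos.2 hpq)] at h
    linarith
  · simp
  · have h := hf.slope_le_of_hasDerivAt hq hp hqp hfp
    rw [slope_def_field, div_le_iff₀ (sub_pos.2 hqp)] at h
    linarith

theorem ContDiffOn.hasDerivAt_of_isOpen {U : Set ℝ} {f : ℝ → ℝ} (hf : ContDiffOn ℝ 2 f U)
    (hU : IsOpen U) {x : ℝ} (hx : x ∈ U) :
    HasDerivAt f (deriv f x) x ∧ HasDerivAt (deriv f) (deriv (deriv f) x) x :=
  ⟨((hf.contDiffAt (hU.mem_nhds hx)).differentiableAt two_ne_zero).hasDerivAt,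
    (((hf.deriv_of_isOpen hU (by norm_num)).contDiffAt (hU.mem_nhds hx)).differentiableAt
      one_ne_zero).hasDerivAt⟩

section Taylor

variable {s : Set ℝ} {f f' f'' : ℝ → ℝ} {p q : ℝ}

theorem add_deriv_mul_sub_le_of_deriv2_nonneg (hs : Convex ℝ s)
    (hf : ∀ x ∈ s, HasDerivAt f (f' x) x) (hf' : ∀ x ∈ s, HasDerivAt f' (f'' x) x)
    (hf'' : ∀ x ∈ s, 0 ≤ f'' x) (hp : p ∈ s) (hq : q ∈ s) :
    f p + f' p * (q - p) ≤ f q := by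
  have hconv : ConvexOn ℝ s f :=
    convexOn_of_hasDerivWithinAt2_nonneg hs (fun x hx => (hf x hx).continuousAt.continuousWithinAt)
      (fun x hx => (hf x (interior_subset hx)).hasDerivWithinAt)
      (fun x hx => (hf' x (interior_subset hx)).hasDerivWithinAt)
      (fun x hx => hf'' x (interior_subset hx))
  exact hconv.add_deriv_mul_sub_le hp hq (hf p hp)

theorem mul_sq_le_sub_sub_deriv_mul_of_le_deriv2 {c : ℝ} (hs : Convex ℝ s)
    (hf : ∀ x ∈ s, HasDerivAt f (f' x) x) (hf' : ∀ x ∈ s, HasDerivAt f' (f'' x) x)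
    (hc : ∀ x ∈ s, c ≤ f'' x) (hp : p ∈ s) (hq : q ∈ s) :
    c / 2 * (q - p) ^ 2 ≤ f q - f p - f' p * (q - p) := by
  have key := add_deriv_mul_sub_le_of_deriv2_nonneg (f := fun x => f x - c / 2 * x ^ 2)
    (f' := fun x => f' x - c * x) (f'' := fun x => f'' x - c) hs
    (fun x hx => ((hf x hx).sub ((hasDerivAt_pow 2 x).const_mul (c / 2))).congr_deriv (by ring))
    (fun x hx => ((hf' x hx).sub ((hasDerivAt_id x).const_mul c)).congr_deriv (by ring))
    (fun x hx => sub_nonneg.2 (hc x hx)) hp hq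
  linarith

theorem sub_sub_deriv_mul_le_mul_sq_of_deriv2_le {C : ℝ} (hs : Convex ℝ s)
    (hf : ∀ x ∈ s, HasDerivAt f (f' x) x) (hf' : ∀ x ∈ s, HasDerivAt f' (f'' x) x)
    (hC : ∀ x ∈ s, f'' x ≤ C) (hp : p ∈ s) (hq : q ∈ s) :
    f q - f p - f' p * (q - p) ≤ C / 2 * (q - p) ^ 2 := by
  have key := mul_sq_le_sub_sub_deriv_mul_of_le_deriv2 (f := -f) (f' := -f') (f'' := -f'') hs
    (fun x hx => (hf x hx).neg) (fun x hx => (hf' x hx).neg) (fun x hx => neg_le_neg (hC x hx)) hp hq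
  simp only [Pi.neg_apply] at key
  linarith

end Taylor

theorem two_mul_mul_sum_mul_le {ι : Type*} (S : Finset ι) {e w : ι → ℝ}
    (he : ∀ i ∈ S, 0 ≤ e i) (α β : ℝ) :
    2 * α * β * ∑ i ∈ S, e i * w i ≤ α ^ 2 * ∑ i ∈ S, e i + β ^ 2 * ∑ i ∈ S, e i * w i ^ 2 := by
  have h : 0 ≤ ∑ i ∈ S, e i * (α - β * w i) ^ 2 :=
    sum_nonneg fun i hi => mul_nonneg (he i hi) (sq_nonneg _)
  simp only [mul_sum, ← sum_add_distrib]
  rw [← sub_nonneg, ← sum_sub_distrib]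
  convert h using 2 with i
  ring

section Upwind

variable {ι : Type*} (S : Finset ι) (a : ι → ℝ) {u ρσ : ι → ℝ} {ρn : ℝ}

theorem sum_upwind_flux_eq (hρσ : ∀ σ ∈ S, 0 ≤ u σ → ρσ σ = ρn) (g : ℝ → ℝ) :
    ∑ σ ∈ S, a σ * g (ρσ σ) * u σ = g ρn * ∑ σ ∈ S, a σ * u σ
      - ∑ σ ∈ S, a σ * max (-u σ) 0 * (g (ρσ σ) - g ρn) := by
  rw [mul_sum, ← sum_sub_distrib]
  refine sum_congr rfl fun σ hσ => ?_
  rcases le_or_gt 0 (u σ) with hu | hu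
  · rw [hρσ σ hσ hu, max_eq_right (by linarith)]
    ring
  · rw [max_eq_left (by linarith)]
    ring

theorem upwind_entropy_identity (hρσ : ∀ σ ∈ S, 0 ≤ u σ → ρσ σ = ρn) {K δt ρn1 : ℝ}
    (hmass : K / δt * (ρn1 - ρn) + ∑ σ ∈ S, a σ * ρσ σ * u σ = 0) (φ : ℝ → ℝ) (φ' : ℝ) :
    K / δt * (φ ρn1 - φ ρn) + ∑ σ ∈ S, a σ * φ (ρσ σ) * u σ
        + (ρn * φ' - φ ρn) * ∑ σ ∈ S, a σ * u σ
      = K / δt * (φ ρn1 - φ ρn - φ' * (ρn1 - ρn))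
        - ∑ σ ∈ S, a σ * max (-u σ) 0 * (φ (ρσ σ) - φ ρn - φ' * (ρσ σ - ρn)) := by
  have hsplit : ∑ σ ∈ S, a σ * max (-u σ) 0 * (φ (ρσ σ) - φ ρn - φ' * (ρσ σ - ρn))
      = ∑ σ ∈ S, a σ * max (-u σ) 0 * (φ (ρσ σ) - φ ρn)
        - φ' * ∑ σ ∈ S, a σ * max (-u σ) 0 * (ρσ σ - ρn) := by
    rw [mul_sum, ← sum_sub_distrib]
    exact sum_congr rfl fun _ _ => by ring
  rw [sum_upwind_flux_eq S a hρσ fun x => x] at hmass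
  rw [sum_upwind_flux_eq S a hρσ φ, hsplit]
  linear_combination φ' * hmass

theorem upwind_time_variation_le (ha : ∀ σ ∈ S, 0 ≤ a σ) (hρσ : ∀ σ ∈ S, 0 ≤ u σ → ρσ σ = ρn)
    {K δt ρn1 m Mφ M : ℝ} (hK : 0 ≤ K) (hδt : 0 < δt) (hm : 0 < m) (hmMφ : m ≤ Mφ)
    (hρn : |ρn| ≤ M) (hmass : K / δt * (ρn1 - ρn) + ∑ σ ∈ S, a σ * ρσ σ * u σ = 0)
    (hcfl : δt * Mφ ^ 2 * ∑ σ ∈ S, a σ * max (-u σ) 0 ≤ m ^ 2 * K) :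
    Mφ * (K / δt * (ρn1 - ρn) ^ 2) ≤ m * ∑ σ ∈ S, a σ * max (-u σ) 0 * (ρσ σ - ρn) ^ 2
      + 2 * Mφ * M * |ρn1 - ρn| * |∑ σ ∈ S, a σ * u σ| := by
  rw [sum_upwind_flux_eq S a hρσ fun x => x] at hmass
  have he : ∀ σ ∈ S, 0 ≤ a σ * max (-u σ) 0 := fun σ hσ => mul_nonneg (ha σ hσ) (le_max_right _ _)
  have hyoung := two_mul_mul_sum_mul_le S he (Mφ * (ρn1 - ρn)) m (w := fun σ => ρσ σ - ρn)
  have hcfl' : Mφ ^ 2 * ∑ σ ∈ S, a σ * max (-u σ) 0 ≤ m ^ 2 * (K / δt) := by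
    rw [mul_div_assoc', le_div_iff₀ hδt]; linarith
  have hdiv : -((ρn1 - ρn) * ρn * ∑ σ ∈ S, a σ * u σ)
      ≤ |ρn1 - ρn| * M * |∑ σ ∈ S, a σ * u σ| := by
    calc _ ≤ |(ρn1 - ρn) * ρn * ∑ σ ∈ S, a σ * u σ| := neg_le_abs _
      _ = |ρn1 - ρn| * |ρn| * |∑ σ ∈ S, a σ * u σ| := by rw [abs_mul, abs_mul]
      _ ≤ _ := by gcongr
  have hx : 0 ≤ K / δt := div_nonneg hK hδt.le
  refine le_of_mul_le_mul_left ?_ hm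
  -- `2 m M_φ (K/δt) δ² = 2 m M_φ δ (Σ a (u)⁻ (ρ_σ - ρⁿ) - ρⁿ Σ a u)`; Young and CFL bound the first
  -- part by `m² ((K/δt) δ² + Σ a (u)⁻ (ρ_σ - ρⁿ)²)`, and `m ≤ M_φ` absorbs `m² (K/δt) δ²`.
  linear_combination hyoung + mul_le_mul_of_nonneg_right hcfl' (sq_nonneg (ρn1 - ρn))
    + mul_le_mul_of_nonneg_left hdiv (by have := hm.le.trans hmMφ; positivity : 0 ≤ 2 * m * Mφ)
    + mul_nonneg (mul_nonneg (sub_nonneg.2 hmMφ) hm.le) (mul_nonneg hx (sq_nonneg (ρn1 - ρn)))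
    + (2 * m * Mφ * (ρn1 - ρn)) * hmass

end Upwind

theorem exists_abs_le_and_add_nonpos {E B : ℝ} (hE : E ≤ B) (hB : 0 ≤ B) :
    ∃ R : ℝ, |R| ≤ B ∧ E + R ≤ 0 :=
  ⟨-max E 0, by rw [abs_neg, abs_of_nonneg (le_max_right _ _)]; exact max_le hE hB,
    by linarith [le_max_left E 0]⟩

theorem explicit_upwind_mass_renormalization_general
    (M : ℝ) (hM : 1 < M)
    (φ : ℝ → ℝ) (hφ : ContDiffOn ℝ 2 φ (Set.Ioi 0))
    (m Mφ : ℝ) (hm0 : 0 < m)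
    (hm : ∀ x ∈ Set.Icc (1 / M) M, m ≤ deriv (deriv φ) x)
    (hMφ : ∀ x ∈ Set.Icc (1 / M) M, deriv (deriv φ) x ≤ Mφ)
    {ι : Type*} (S : Finset ι) (a u ρL : ι → ℝ)
    (ha : ∀ σ ∈ S, 0 ≤ a σ) (hρL : ∀ σ ∈ S, ρL σ ∈ Set.Icc (1 / M) M)
    (K δt ρn ρn1 : ℝ) (hK : 0 < K) (hδt : 0 < δt)
    (hρn : ρn ∈ Set.Icc (1 / M) M) (hρn1 : ρn1 ∈ Set.Icc (1 / M) M)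
    (ρσ : ι → ℝ) (hρσ : ∀ σ ∈ S, ρσ σ = if 0 ≤ u σ then ρn else ρL σ)
    (hmass : K / δt * (ρn1 - ρn) + ∑ σ ∈ S, a σ * ρσ σ * u σ = 0)
    (hcfl : δt * Mφ ^ 2 * ∑ σ ∈ S, a σ * max (-u σ) 0 ≤ m ^ 2 * K) :
    ∃ R : ℝ, |R| ≤ Mφ * M * |ρn1 - ρn| * |∑ σ ∈ S, a σ * u σ| ∧
      K / δt * (φ ρn1 - φ ρn) + ∑ σ ∈ S, a σ * φ (ρσ σ) * u σ
        + (ρn * deriv φ ρn - φ ρn) * ∑ σ ∈ S, a σ * u σ + R ≤ 0 := by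
  have hM0 : 0 < M := by linarith
  have hpos : Icc (1 / M) M ⊆ Ioi 0 := fun x hx => (one_div_pos.2 hM0).trans_le hx.1
  have h1 : (1 : ℝ) ∈ Icc (1 / M) M := ⟨(div_le_one hM0).2 hM.le, hM.le⟩
  have hmMφ : m ≤ Mφ := (hm 1 h1).trans (hMφ 1 h1)
  have hupwind : ∀ σ ∈ S, 0 ≤ u σ → ρσ σ = ρn := fun σ hσ hu => by rw [hρσ σ hσ, if_pos hu]
  have hρσM : ∀ σ ∈ S, ρσ σ ∈ Icc (1 / M) M := fun σ hσ => by
    rw [hρσ σ hσ]; split_ifs; exacts [hρn, hρL σ hσ]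
  have hφ1 x (hx : x ∈ Icc (1 / M) M) := (hφ.hasDerivAt_of_isOpen isOpen_Ioi (hpos hx)).1
  have hφ2 x (hx : x ∈ Icc (1 / M) M) := (hφ.hasDerivAt_of_isOpen isOpen_Ioi (hpos hx)).2
  have htime := sub_sub_deriv_mul_le_mul_sq_of_deriv2_le (convex_Icc _ _) hφ1 hφ2 hMφ hρn hρn1
  have hfaces : m / 2 * ∑ σ ∈ S, a σ * max (-u σ) 0 * (ρσ σ - ρn) ^ 2
      ≤ ∑ σ ∈ S, a σ * max (-u σ) 0 * (φ (ρσ σ) - φ ρn - deriv φ ρn * (ρσ σ - ρn)) := by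
    rw [mul_sum]
    refine sum_le_sum fun σ hσ => ?_
    have := mul_le_mul_of_nonneg_left
      (mul_sq_le_sub_sub_deriv_mul_of_le_deriv2 (convex_Icc _ _) hφ1 hφ2 hm hρn (hρσM σ hσ))
      (mul_nonneg (ha σ hσ) (le_max_right (-u σ) 0))
    linarith
  have hdiff := upwind_time_variation_le S a ha hupwind hK.le hδt hm0 hmMφ
    ((abs_of_pos (hpos hρn)).trans_le hρn.2) hmass hcfl
  refine exists_abs_le_and_add_nonpos ?_ (by have := hm0.trans_le hmMφ; positivity)
  rw [upwind_entropy_identity S a hupwind hmass]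
  linear_combination mul_le_mul_of_nonneg_left htime (div_nonneg hK.le hδt.le) + hfaces + hdiff / 2

/-- Renormalized entropy inequality for the explicit upwind discretization of the
mass balance under a CFL condition, up to a remainder `R` controlled by the time
variation of the density and the discrete divergence of the velocity. -/
theorem explicit_upwind_mass_renormalization
    (M : ℝ) (hM : 1 < M)
    (φ : ℝ → ℝ) (hφ : ContDiffOn ℝ 2 φ (Set.Ioi 0))
    (hφ'' : ∀ x ∈ Set.Ioi (0 : ℝ), 0 < deriv (deriv φ) x)
    (m Mφ : ℝ) (hm0 : 0 < m)
    (hm : ∀ x ∈ Set.Icc (1 / M) M, m ≤ deriv (deriv φ) x)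
    (hMφ : ∀ x ∈ Set.Icc (1 / M) M, deriv (deriv φ) x ≤ Mφ)
    {ι : Type*} (S : Finset ι) (a u ρL : ι → ℝ)
    (ha : ∀ σ ∈ S, 0 ≤ a σ) (hρL : ∀ σ ∈ S, ρL σ ∈ Set.Icc (1 / M) M)
    (K δt ρn ρn1 : ℝ) (hK : 0 < K) (hδt : 0 < δt)
    (hρn : ρn ∈ Set.Icc (1 / M) M) (hρn1 : ρn1 ∈ Set.Icc (1 / M) M)
    (ρσ : ι → ℝ) (hρσ : ∀ σ ∈ S, ρσ σ = if 0 ≤ u σ then ρn else ρL σ)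
    (hmass : K / δt * (ρn1 - ρn) + ∑ σ ∈ S, a σ * ρσ σ * u σ = 0)
    (hcfl : δt * Mφ ^ 2 * ∑ σ ∈ S, a σ * max (-u σ) 0 ≤ m ^ 2 * K) :
    ∃ R : ℝ, |R| ≤ Mφ * M * |ρn1 - ρn| * |∑ σ ∈ S, a σ * u σ| ∧
      K / δt * (φ ρn1 - φ ρn) + ∑ σ ∈ S, a σ * φ (ρσ σ) * u σ
        + (ρn * deriv φ ρn - φ ρn) * ∑ σ ∈ S, a σ * u σ + R ≤ 0 :=
  explicit_upwind_mass_renormalization_general M hM φ hφ m Mφ hm0 hm hMφ S a u ρL ha hρL K δt ρn ρn1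
    hK hδt hρn hρn1 ρσ hρσ hmass hcfl
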